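/- Assume (A.1)–(A.4). If f:X→ℝ is measurable and π-integrable with Π_k f = f π-a.e. for every k=1,…,K, then f is constant π-a.e., i.e. f(x) = ∫π(dx')f(x') for π-a.e. x. -/

import Mathlib

open MeasureTheory ProbabilityTheory Filter Matrix
open scoped BoundedContinuousFunction ENNReal

noncomputable section

variable {X : Type*} [MeasurableSpace X]

/-- Action of a kernel on a (vector-valued) function: `Πf(x) = ∫ f(y) Π(x,dy)`. -/
def kApp {E : Type*} [NormedAddCommGroup E] [NormedSpace ℝ E]
    (κ : Kernel X X) (f : X → E) (x : X) : E := ∫ y, f y ∂(κ x)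

/-- `sweepOp Ks t k f = P_k^t f`, the length-`t` sweep composition starting at index `k`,
acting on functions. -/
def sweepOp {E : Type*} [NormedAddCommGroup E] [NormedSpace ℝ E]
    (Ks : ℕ → Kernel X X) : ℕ → ℕ → (X → E) → X → E
  | 0, _, f => f
  | (t+1), k, f => kApp (Ks k) (sweepOp Ks t (k+1) f)

/-- `sweepKer Ks t k = P_k^t` as a kernel. -/
def sweepKer (Ks : ℕ → Kernel X X) : ℕ → ℕ → Kernel X X
  | 0, _ => Kernel.id
  | (t+1), k => (sweepKer Ks t (k+1)) ∘ₖ (Ks k)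

/-- `m`-fold iterate of a kernel. -/
def kpow (κ : Kernel X X) : ℕ → Kernel X X
  | 0 => Kernel.id
  | (m+1) => κ ∘ₖ kpow κ m

/-- `π`-stationarity of a kernel. -/
def KerIsStationary (π : Measure X) (κ : Kernel X X) : Prop :=
  ∀ A : Set X, MeasurableSet A → ∫⁻ x, κ x A ∂π = π A

/-- A Gibbs kernel with respect to `π`: a regular conditional distribution kernel
with respect to some sub-σ-algebra. -/
def IsGibbsKernel (π : Measure X) (κ : Kernel X X) : Prop :=
  ∃ m : MeasurableSpace X, m ≤ ‹MeasurableSpace X› ∧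
    ∀ A : Set X, MeasurableSet A →
      (fun x => (κ x A).toReal) =ᵐ[π] π[A.indicator (fun _ => (1:ℝ)) | m]

/-- A small set for a kernel. -/
def IsSmallSet (κ : Kernel X X) (C : Set X) : Prop :=
  ∃ m : ℕ, 1 ≤ m ∧ ∃ νm : Measure X, νm ≠ 0 ∧
    ∀ x ∈ C, ∀ B : Set X, MeasurableSet B → νm B ≤ (kpow κ m) x B

/-- Geometric drift condition (A.3) for the `K`-step composition starting at `k`,
with drift function `V`. -/
def GeoDrift (Ks : ℕ → Kernel X X) (K k : ℕ) (V : X → ℝ) : Prop :=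
  Measurable V ∧ (∀ x, 1 ≤ V x) ∧
  ∃ C : Set X, MeasurableSet C ∧ IsSmallSet (sweepKer Ks K k) C ∧
  ∃ lam b : ℝ, lam < 1 ∧
    (∀ x, Integrable V ((sweepKer Ks K k) x)) ∧
    (∀ x, kApp (sweepKer Ks K k) V x ≤ lam * V x + b * C.indicator (fun _ => (1:ℝ)) x)

/-- ψ-irreducibility (A.2). -/
def SweepIrreducible (Ks : ℕ → Kernel X X) (K : ℕ) (ψ : Measure X) : Prop :=
  ∀ k < K, ∀ A : Set X, MeasurableSet A → 0 < ψ A → ∀ x : X,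
    ∃ t : ℕ, 1 ≤ t ∧ 0 < (sweepKer Ks (K * t) k) x A

/-- Aperiodicity (A.4) of the composition kernel `P_k^K`, relative to ψ. -/
def IsAperiodic (Ks : ℕ → Kernel X X) (K k : ℕ) (ψ : Measure X) : Prop :=
  ¬ ∃ d : ℕ, 2 ≤ d ∧ ∃ D : ℕ → Set X,
    (∀ i < d, MeasurableSet (D i)) ∧
    (∀ i < d, ∀ j < d, i ≠ j → Disjoint (D i) (D j)) ∧
    (∀ i < d, ∀ x ∈ D i, (sweepKer Ks K k) x (D ((i+1) % d)) = 1) ∧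
    ψ ((⋃ i ∈ Finset.range d, D i)ᶜ) = 0

/-- The Poisson-equation solution `ĝ_k = ∑_{t≥0} P_k^t g` (defined as a pointwise tsum). -/
def ghat {d : ℕ} (Ks : ℕ → Kernel X X) (g : X → Fin d → ℝ) (k : ℕ) (x : X) :
    Fin d → ℝ := fun i => ∑' t : ℕ, sweepOp Ks t k g x i

/-- The matrix `∫ π(dx) u(x) v(x)ᵀ`. -/
def covMat {d e : ℕ} (π : Measure X) (u : X → Fin d → ℝ) (v : X → Fin e → ℝ) :
    Matrix (Fin d) (Fin e) ℝ :=
  Matrix.of fun i j => ∫ x, u x i * v x j ∂π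

/-- The matrix `U_k = ∫ π(dx){ffᵀ − (Π_k f)(Π_k f)ᵀ}`. -/
def Umat {p : ℕ} (π : Measure X) (Ks : ℕ → Kernel X X) (f : X → Fin p → ℝ) (k : ℕ) :
    Matrix (Fin p) (Fin p) ℝ :=
  covMat π f f - covMat π (kApp (Ks k) f) (kApp (Ks k) f)

/-- The matrix `V_k = ∫ π(dx){f ĝ_{σ(k)}ᵀ − (Π_k f)(Π_k ĝ_{σ(k)})ᵀ}`. -/
def Vmat {p d : ℕ} (π : Measure X) (Ks : ℕ → Kernel X X) (f : X → Fin p → ℝ)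
    (g : X → Fin d → ℝ) (k : ℕ) : Matrix (Fin p) (Fin d) ℝ :=
  covMat π f (ghat Ks g (k+1))
    - covMat π (kApp (Ks k) f) (kApp (Ks k) (ghat Ks g (k+1)))

/-- The common part of the asymptotic variance:
`∫π g gᵀ + K⁻¹ ∑_k ∑_{t≥1} ∫π {g (P_k^t g)ᵀ + (P_k^t g) gᵀ}`. -/
def sigmaBase {d : ℕ} (π : Measure X) (Ks : ℕ → Kernel X X) (K : ℕ)
    (g : X → Fin d → ℝ) : Matrix (Fin d) (Fin d) ℝ :=
  covMat π g g + (K : ℝ)⁻¹ • ∑ k ∈ Finset.range K, ∑' t : ℕ,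
    (covMat π g (sweepOp Ks (t+1) k g) + covMat π (sweepOp Ks (t+1) k g) g)

/-- The σ-algebra generated by `X_0, …, X_t`. -/
def past {Ω : Type*} (Xt : ℕ → Ω → X) (t : ℕ) : MeasurableSpace Ω :=
  ⨆ i ∈ Finset.range (t+1), MeasurableSpace.comap (Xt i) ‹MeasurableSpace X›

/-- A (time-inhomogeneous) Markov chain with initial law `ν` that at time `t` uses the
transition kernel `Ks t` to generate `X_{t+1}` from `X_t`. -/
structure SweepChain {Ω : Type*} [MeasurableSpace Ω] (Ks : ℕ → Kernel X X)
    (ν : Measure X) (P : Measure Ω) (Xt : ℕ → Ω → X) : Prop where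
  meas : ∀ t, Measurable (Xt t)
  init : P.map (Xt 0) = ν
  markov : ∀ t, ∀ A : Set X, MeasurableSet A →
    (P[fun ω => A.indicator (fun _ => (1:ℝ)) (Xt (t+1) ω) | past Xt t])
      =ᵐ[P] fun ω => ((Ks t) (Xt t ω) A).toReal

/-- `M^{-1/2} S_M` converges in distribution to a centered Gaussian limit with
covariance matrix `Sig` (identified through its characteristic function). -/
def GaussLimit {Ω : Type*} [MeasurableSpace Ω] {d : ℕ} (P : Measure Ω)
    (S : ℕ → Ω → Fin d → ℝ) (Sig : Matrix (Fin d) (Fin d) ℝ) : Prop :=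
  ∃ μZ : Measure (Fin d → ℝ), IsProbabilityMeasure μZ ∧
    (∀ u : Fin d → ℝ,
      ∫ z, Complex.exp (Complex.I * ((∑ i, u i * z i : ℝ) : ℂ)) ∂μZ
        = Complex.exp (-(((u ⬝ᵥ Sig.mulVec u : ℝ) : ℂ)) / 2)) ∧
    ∀ φ : (Fin d → ℝ) →ᵇ ℝ,
      Tendsto (fun M : ℕ => ∫ ω, φ ((M : ℝ) ^ (-(1:ℝ)/2) • S M ω) ∂P) atTop
        (nhds (∫ z, φ z ∂μZ))


/-- The averaged matrix `U = K⁻¹ ∑_k U_k`. -/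
def Ubar {p : ℕ} (π : Measure X) (Ks : ℕ → Kernel X X) (K : ℕ)
    (f : X → Fin p → ℝ) : Matrix (Fin p) (Fin p) ℝ :=
  (K : ℝ)⁻¹ • ∑ k ∈ Finset.range K, Umat π Ks f k

/-- The averaged matrix `V = K⁻¹ ∑_k V_k`. -/
def Vbar {p d : ℕ} (π : Measure X) (Ks : ℕ → Kernel X X) (K : ℕ)
    (f : X → Fin p → ℝ) (g : X → Fin d → ℝ) : Matrix (Fin p) (Fin d) ℝ :=
  (K : ℝ)⁻¹ • ∑ k ∈ Finset.range K, Vmat π Ks f g k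

/-- Asymptotic variance `Σ_C` of the general (per-component weight) control variate scheme. -/
def sigmaCvar {p d : ℕ} (π : Measure X) (Ks : ℕ → Kernel X X) (K : ℕ)
    (f : X → Fin p → ℝ) (g : X → Fin d → ℝ)
    (Cs : ℕ → Matrix (Fin p) (Fin d) ℝ) : Matrix (Fin d) (Fin d) ℝ :=
  sigmaBase π Ks K g + (K : ℝ)⁻¹ • ∑ k ∈ Finset.range K,
    ((Cs (k+1))ᵀ * Umat π Ks f k * Cs (k+1)
      - (Cs (k+1))ᵀ * Vmat π Ks f g k - (Vmat π Ks f g k)ᵀ * Cs (k+1))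

/-- Asymptotic variance `Σ_C` of the fixed-weight control variate scheme. -/
def sigmaCfix {p d : ℕ} (π : Measure X) (Ks : ℕ → Kernel X X) (K : ℕ)
    (f : X → Fin p → ℝ) (g : X → Fin d → ℝ)
    (C : Matrix (Fin p) (Fin d) ℝ) : Matrix (Fin d) (Fin d) ℝ :=
  sigmaBase π Ks K g
    + (Cᵀ * Ubar π Ks K f * C - Cᵀ * Vbar π Ks K f g - (Vbar π Ks K f g)ᵀ * C)

section MyAux

lemma myStat_lintegral (π : Measure X) (κ : Kernel X X)
    (hstat : KerIsStationary π κ) {u : X → ℝ≥0∞} (hu : Measurable u) :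
    ∫⁻ x, ∫⁻ y, u y ∂κ x ∂π = ∫⁻ y, u y ∂π := by
  have hb : π.bind κ = π := by
    ext A hA
    rw [Measure.bind_apply hA κ.measurable.aemeasurable]
    exact hstat A hA
  conv_rhs => rw [← hb]
  rw [Measure.lintegral_bind κ.measurable.aemeasurable hu.aemeasurable]

lemma myNull (π : Measure X) (κ : Kernel X X) (hstat : KerIsStationary π κ)
    {N : Set X} (hN : MeasurableSet N) (h0 : π N = 0) :
    ∀ᵐ x ∂π, κ x N = 0 := by
  have h1 : ∫⁻ x, κ x N ∂π = 0 := by rw [hstat N hN, h0]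
  rw [lintegral_eq_zero_iff (κ.measurable_coe hN)] at h1
  filter_upwards [h1] with x hx using hx

lemma myNullAE (π : Measure X) (κ : Kernel X X) (hstat : KerIsStationary π κ)
    {p : X → Prop} (hp : ∀ᵐ y ∂π, p y) :
    ∀ᵐ x ∂π, ∀ᵐ y ∂(κ x), p y := by
  have hN0 : π (toMeasurable π {y | ¬ p y}) = 0 := by
    rw [measure_toMeasurable]; exact ae_iff.mp hp
  filter_upwards [myNull π κ hstat (measurableSet_toMeasurable _ _) hN0] with x hx
  exact ae_iff.mpr (measure_mono_null (subset_toMeasurable _ _) hx)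

lemma myAEInt (π : Measure X) (κ : Kernel X X) [IsMarkovKernel κ]
    (hstat : KerIsStationary π κ) {f : X → ℝ} (hfm : Measurable f)
    (hfi : Integrable f π) : ∀ᵐ x ∂π, Integrable f (κ x) := by
  have hu : Measurable fun y => (‖f y‖₊ : ℝ≥0∞) := hfm.nnnorm.coe_nnreal_ennreal
  have h2 : ∫⁻ x, ∫⁻ y, (‖f y‖₊ : ℝ≥0∞) ∂κ x ∂π ≠ ⊤ := by
    rw [myStat_lintegral π κ hstat hu]; exact hfi.2.ne
  have h3 : ∀ᵐ x ∂π, ∫⁻ y, (‖f y‖₊ : ℝ≥0∞) ∂κ x < ⊤ :=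
    ae_lt_top (Measurable.lintegral_kernel_prod_right' (hu.comp measurable_snd)) h2
  filter_upwards [h3] with x hx
  exact ⟨hfm.aestronglyMeasurable, hx⟩

lemma myIntMax {μ : Measure X} [IsFiniteMeasure μ] {f : X → ℝ} (hf : Integrable f μ) (c : ℝ) :
    Integrable (fun y => max (f y) c) μ :=
  (hf.sup (integrable_const c)).congr (Eventually.of_forall fun _ => rfl)

lemma myKappStat (π : Measure X) [IsProbabilityMeasure π] (κ : Kernel X X) [IsMarkovKernel κ]
    (hstat : KerIsStationary π κ) {h : X → ℝ} (hm : Measurable h) (hi : Integrable h π)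
    (h0 : ∀ x, 0 ≤ h x) :
    Integrable (fun x => ∫ y, h y ∂κ x) π ∧ ∫ x, ∫ y, h y ∂κ x ∂π = ∫ y, h y ∂π := by
  have hhm : Measurable fun y => ENNReal.ofReal (h y) := hm.ennreal_ofReal
  set u : X → ℝ≥0∞ := fun x => ∫⁻ y, ENNReal.ofReal (h y) ∂κ x with hu_def
  have hum : Measurable u := Measurable.lintegral_kernel_prod_right' (hhm.comp measurable_snd)
  have hpt : ∀ x, ∫ y, h y ∂κ x = (u x).toReal := fun x => by
    rw [integral_eq_lintegral_of_nonneg_ae (Eventually.of_forall h0) hm.aestronglyMeasurable]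
  have hfin : ∫⁻ x, u x ∂π ≠ ⊤ := by
    rw [myStat_lintegral π κ hstat hhm]
    have hle : ∫⁻ y, ENNReal.ofReal (h y) ∂π ≤ ∫⁻ y, (‖h y‖₊ : ℝ≥0∞) ∂π := by
      refine lintegral_mono fun y => ?_
      rw [← enorm_eq_nnnorm, Real.enorm_eq_ofReal_abs]
      exact ENNReal.ofReal_le_ofReal (le_abs_self _)
    exact (lt_of_le_of_lt hle hi.2).ne
  constructor
  · have := integrable_toReal_of_lintegral_ne_top hum.aemeasurable hfin
    exact this.congr (Eventually.of_forall fun x => (hpt x).symm)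
  · calc ∫ x, ∫ y, h y ∂κ x ∂π = ∫ x, (u x).toReal ∂π := by simp_rw [hpt]
    _ = (∫⁻ x, u x ∂π).toReal := integral_toReal hum.aemeasurable (ae_lt_top hum hfin)
    _ = (∫⁻ y, ENNReal.ofReal (h y) ∂π).toReal := by rw [myStat_lintegral π κ hstat hhm]
    _ = ∫ y, h y ∂π := (integral_eq_lintegral_of_nonneg_ae (Eventually.of_forall h0)
          hm.aestronglyMeasurable).symm

lemma myHarmMax (π : Measure X) [IsProbabilityMeasure π] (κ : Kernel X X) [IsMarkovKernel κ]
    (hstat : KerIsStationary π κ) {f : X → ℝ} (hfm : Measurable f) (hfi : Integrable f π)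
    (hfix : (fun x => ∫ y, f y ∂κ x) =ᵐ[π] f) (c : ℝ) :
    (fun x => ∫ y, max (f y) c ∂κ x) =ᵐ[π] fun x => max (f x) c := by
  set g : X → ℝ := fun y => max (f y) c with hg
  have hgm : Measurable g := hfm.max measurable_const
  have hgi : Integrable g π := myIntMax hfi c
  set h : X → ℝ := fun y => g y - c with hh
  have hhm : Measurable h := hgm.sub measurable_const
  have hhi : Integrable h π := hgi.sub (integrable_const c)
  have hh0 : ∀ y, 0 ≤ h y := fun y => sub_nonneg.2 (le_max_right _ _)
  obtain ⟨hKint, hKeq⟩ := myKappStat π κ hstat hhm hhi hh0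
  have hfae := myAEInt π κ hstat hfm hfi
  set w : X → ℝ := fun x => ∫ y, g y ∂κ x - g x with hw
  have hw0 : ∀ᵐ x ∂π, 0 ≤ w x := by
    filter_upwards [hfae, hfix] with x hx hxf
    have hgix : Integrable g (κ x) := myIntMax hx c
    have h1 : f x ≤ ∫ y, g y ∂κ x := by
      rw [← hxf]; exact integral_mono hx hgix fun y => le_max_left _ _
    have h2 : c ≤ ∫ y, g y ∂κ x := by
      have h3 : ∫ _, c ∂κ x ≤ ∫ y, g y ∂κ x :=
        integral_mono (integrable_const c) hgix fun y => le_max_right _ _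
      simpa [measure_univ] using h3
    have : g x ≤ ∫ y, g y ∂κ x := max_le h1 h2
    simp only [hw, sub_nonneg]; exact this
  have hwrep : w =ᵐ[π] fun x => (∫ y, h y ∂κ x + c) - g x := by
    filter_upwards [hfae] with x hx
    have hgix : Integrable g (κ x) := myIntMax hx c
    have h4 : ∫ y, g y ∂κ x = ∫ y, h y ∂κ x + c := by
      have h5 : ∫ y, (h y + c) ∂κ x = ∫ y, h y ∂κ x + ∫ _, c ∂κ x :=
        integral_add (hgix.sub (integrable_const c)) (integrable_const c)
      have h6 : ∀ y, h y + c = g y := fun y => by simp [hh]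
      simp only [h6] at h5
      simpa [measure_univ] using h5
    simp [hw, h4]
  have hwi : Integrable w π :=
    ((hKint.add (integrable_const c)).sub hgi).congr hwrep.symm
  have hwint : ∫ x, w x ∂π = 0 := by
    have hadd : Integrable (fun x => ∫ y, h y ∂κ x + c) π := hKint.add (integrable_const c)
    rw [integral_congr_ae hwrep, integral_sub hadd hgi,
      integral_add hKint (integrable_const c), hKeq]
    have h7 : ∫ y, h y ∂π = ∫ y, g y ∂π - c := by
      have := integral_sub hgi (integrable_const (μ := π) c)
      simpa [measure_univ, hh] using this
    rw [h7]; simp [measure_univ]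
  have hz := (integral_eq_zero_iff_of_nonneg_ae hw0 hwi).mp hwint
  filter_upwards [hz] with x hx
  have hx' : ∫ y, g y ∂κ x - g x = 0 := hx
  linarith

lemma myLevel (π : Measure X) [IsProbabilityMeasure π] (κ : Kernel X X) [IsMarkovKernel κ]
    (hstat : KerIsStationary π κ) {f : X → ℝ} (hfm : Measurable f) (hfi : Integrable f π)
    (hfix : (fun x => ∫ y, f y ∂κ x) =ᵐ[π] f) (c : ℝ) :
    ∀ᵐ x ∂π, κ x {y | c < f y} = Set.indicator {y | c < f y} (fun _ => (1:ℝ≥0∞)) x := by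
  set A : Set X := {y | c < f y} with hA
  have hAm : MeasurableSet A := measurableSet_lt measurable_const hfm
  set ε : ℕ → ℝ := fun n => ((n:ℝ)+1)⁻¹ with hε_def
  have hε : ∀ n, 0 < ε n := fun n => by positivity
  set G : ℝ → X → ℝ := fun a y => max (f y) a with hG
  set φ : ℕ → X → ℝ := fun n y => (G c y - G (c + ε n) y) / ε n + 1 with hφ
  have hφm : ∀ n, Measurable (φ n) := fun n =>
    (((hfm.max measurable_const).sub (hfm.max measurable_const)).div_const _).add_const 1
  -- bounds
  have hφbd : ∀ n y, 0 ≤ φ n y ∧ φ n y ≤ 1 := by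
    intro n y
    have h1 : G c y ≤ G (c + ε n) y := max_le_max le_rfl (by linarith [hε n])
    have h2 : G (c + ε n) y ≤ G c y + ε n := by
      refine max_le ?_ ?_
      · exact le_trans (le_max_left (f y) c) (by linarith [hε n])
      · have := le_max_right (f y) c; linarith
    have hne : ε n ≠ 0 := (hε n).ne'
    have hrw : φ n y = ((G c y - G (c + ε n) y) + ε n) / ε n := by
      rw [add_div, div_self hne]
    rw [hrw]
    constructor
    · exact div_nonneg (by linarith) (hε n).le
    · rw [div_le_one (hε n)]; linarith
  -- pointwise limit
  have hφlim : ∀ y, Tendsto (fun n => φ n y) atTop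
      (nhds (A.indicator (fun _ => (1:ℝ)) y)) := by
    intro y
    by_cases hy : y ∈ A
    · rw [Set.indicator_of_mem hy]
      have hy' : c < f y := hy
      obtain ⟨N, hN⟩ := exists_nat_gt (f y - c)⁻¹
      refine Tendsto.congr' ?_ tendsto_const_nhds
      rw [eventuallyEq_iff_exists_mem]
      refine ⟨{n | N ≤ n}, mem_atTop N, fun n hn => ?_⟩
      have hpos : 0 < f y - c := by linarith
      have h2 : (f y - c)⁻¹ < (n:ℝ) + 1 := by
        have : (N:ℝ) ≤ n := Nat.cast_le.2 hn
        linarith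
      have h3 : ε n < f y - c := by
        have h4 := (inv_lt_inv₀ (by positivity) (by positivity)).mpr h2
        rwa [inv_inv] at h4
      have hGc : G c y = f y := max_eq_left (by linarith)
      have hGc' : G (c + ε n) y = f y := max_eq_left (by linarith)
      simp [hφ, hGc, hGc']
    · rw [Set.indicator_of_notMem hy]
      have hy' : f y ≤ c := le_of_not_gt hy
      have : ∀ n, φ n y = 0 := by
        intro n
        have hGc : G c y = c := max_eq_right hy'
        have hGc' : G (c + ε n) y = c + ε n := max_eq_right (by linarith [hε n])
        simp [hφ, hGc, hGc', neg_div, div_self (hε n).ne']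
      simpa [this] using tendsto_const_nhds
  -- a.e. facts
  have harm : ∀ᵐ x ∂π, (∀ n : ℕ, (∫ y, G c y ∂κ x = G c x) ∧
      (∫ y, G (c + ε n) y ∂κ x = G (c + ε n) x)) ∧ Integrable f (κ x) := by
    refine (ae_all_iff.2 fun n => ?_).and (myAEInt π κ hstat hfm hfi)
    exact (myHarmMax π κ hstat hfm hfi hfix c).and (myHarmMax π κ hstat hfm hfi hfix (c + ε n))
  filter_upwards [harm] with x hx
  obtain ⟨hxn, hxint⟩ := hx
  have hφint : ∀ n, ∫ y, φ n y ∂κ x = φ n x := by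
    intro n
    have h1 : Integrable (G c) (κ x) := myIntMax hxint c
    have h2 : Integrable (G (c + ε n)) (κ x) := myIntMax hxint _
    have hrw : ∀ y, φ n y = (ε n)⁻¹ * (G c y - G (c + ε n) y) + 1 := fun y => by
      simp only [hφ]; rw [div_eq_inv_mul]
    simp_rw [hrw]
    have hadd : Integrable (fun y => (ε n)⁻¹ * (G c y - G (c + ε n) y)) (κ x) :=
      (h1.sub h2).const_mul _
    rw [integral_add hadd (integrable_const 1), integral_const_mul, integral_sub h1 h2,
      (hxn n).1, (hxn n).2]
    simp [measure_univ]
  have hTa : Tendsto (fun n => ∫ y, φ n y ∂κ x) atTop (nhds ((κ x A).toReal)) := by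
    have hind : ∫ y, A.indicator (fun _ => (1:ℝ)) y ∂κ x = (κ x A).toReal := by
      rw [integral_indicator_const _ hAm]; simp; rfl
    rw [← hind]
    refine tendsto_integral_of_dominated_convergence (fun _ => (1:ℝ))
      (fun n => (hφm n).aestronglyMeasurable) (integrable_const 1) ?_
      (Eventually.of_forall hφlim)
    intro n
    refine Eventually.of_forall fun y => ?_
    have := hφbd n y
    show ‖φ n y‖ ≤ 1
    rw [Real.norm_eq_abs, abs_le]
    exact ⟨by linarith [this.1], this.2⟩
  have hTb : Tendsto (fun n => ∫ y, φ n y ∂κ x) atTop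
      (nhds (A.indicator (fun _ => (1:ℝ)) x)) := by
    simp_rw [hφint]; exact hφlim x
  have heq : (κ x A).toReal = A.indicator (fun _ => (1:ℝ)) x := tendsto_nhds_unique hTa hTb
  have hne : κ x A ≠ ⊤ := measure_ne_top _ _
  by_cases hxA : x ∈ A
  · rw [Set.indicator_of_mem hxA] at heq ⊢
    rw [← ENNReal.ofReal_toReal hne, heq]; simp
  · rw [Set.indicator_of_notMem hxA] at heq ⊢
    rw [← ENNReal.ofReal_toReal hne, heq]; simp

lemma myMarkovSweep (Ks : ℕ → Kernel X X) [∀ k, IsMarkovKernel (Ks k)] :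
    ∀ t k, IsMarkovKernel (sweepKer Ks t k) := by
  intro t
  induction t with
  | zero => intro k; show IsMarkovKernel (Kernel.id : Kernel X X); infer_instance
  | succ t ih =>
      intro k
      haveI := ih (k+1)
      show IsMarkovKernel ((sweepKer Ks t (k+1)) ∘ₖ (Ks k))
      infer_instance

lemma myInvar (π : Measure X) (Ks : ℕ → Kernel X X) [∀ k, IsMarkovKernel (Ks k)]
    (hstatAll : ∀ k, KerIsStationary π (Ks k)) {A : Set X} (hAm : MeasurableSet A)
    (hlev : ∀ k, ∀ᵐ x ∂π, Ks k x A = A.indicator (fun _ => (1:ℝ≥0∞)) x) :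
    ∀ t k, ∀ᵐ x ∂π, sweepKer Ks t k x A = A.indicator (fun _ => (1:ℝ≥0∞)) x := by
  intro t
  induction t with
  | zero =>
      intro k
      refine Eventually.of_forall fun x => ?_
      show (Kernel.id : Kernel X X) x A = _
      rw [Kernel.id_apply, Measure.dirac_apply' _ hAm]
      rfl
  | succ t ih =>
      intro k
      have hη := ih (k+1)
      set N := toMeasurable π {x | ¬ (sweepKer Ks t (k+1)) x A
          = A.indicator (fun _ => (1:ℝ≥0∞)) x} with hN
      have hN0 : π N = 0 := by rw [measure_toMeasurable]; exact ae_iff.mp hη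
      filter_upwards [myNull π (Ks k) (hstatAll k) (measurableSet_toMeasurable _ _) hN0,
        hlev k] with x hxN hxA
      show ((sweepKer Ks t (k+1)) ∘ₖ (Ks k)) x A = _
      rw [Kernel.comp_apply' _ _ _ hAm]
      have hcong : ∫⁻ y, (sweepKer Ks t (k+1)) y A ∂(Ks k x)
          = ∫⁻ y, A.indicator (fun _ => (1:ℝ≥0∞)) y ∂(Ks k x) := by
        refine lintegral_congr_ae ?_
        have hae : ∀ᵐ y ∂(Ks k x), y ∉ N := by
          rw [ae_iff]
          refine measure_mono_null ?_ hxN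
          intro y hy
          simpa using hy
        filter_upwards [hae] with y hy
        by_contra hne
        exact hy (subset_toMeasurable _ _ hne)
      rw [hcong, show (∫⁻ y, A.indicator (fun _ => (1:ℝ≥0∞)) y ∂(Ks k x)) = Ks k x A
        from lintegral_indicator_one hAm, hxA]

end MyAux

/-- Under (A.1)–(A.4), a π-integrable function fixed by each kernel is π-a.e. constant. -/
theorem stmt_9
    {X : Type*} [MetricSpace X] [CompleteSpace X] [TopologicalSpace.SeparableSpace X]
    [MeasurableSpace X] [BorelSpace X]
    (K : ℕ) (hK : 2 ≤ K)
    (Ks : ℕ → Kernel X X) [∀ k, IsMarkovKernel (Ks k)]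
    (hper : ∀ k, Ks (k + K) = Ks k)
    (π ψ : Measure X) [IsProbabilityMeasure π] [IsProbabilityMeasure ψ]
    (Vs : ℕ → X → ℝ)
    (hA1 : ∀ k < K, KerIsStationary π (Ks k))
    (hA2 : SweepIrreducible Ks K ψ)
    (hA3 : ∀ k < K, GeoDrift Ks K k (Vs k))
    (hA4 : ∀ k < K, IsAperiodic Ks K k ψ)
    (f : X → ℝ) (hfm : Measurable f) (hfi : Integrable f π)
    (hfix : ∀ k < K, (fun x => kApp (Ks k) f x) =ᵐ[π] f) :
    f =ᵐ[π] fun _ => ∫ x, f x ∂π := by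
  have hKpos : 0 < K := by omega
  have hKsmod : ∀ k, Ks k = Ks (k % K) := by
    intro k
    induction k using Nat.strong_induction_on with
    | _ k ih =>
      by_cases h : k < K
      · rw [Nat.mod_eq_of_lt h]
      · push_neg at h
        have hk : k = (k - K) + K := (Nat.sub_add_cancel h).symm
        rw [hk, hper (k - K), ih (k - K) (by omega), Nat.add_mod_right]
  have hstatAll : ∀ k, KerIsStationary π (Ks k) := fun k => by
    rw [hKsmod k]; exact hA1 _ (Nat.mod_lt _ hKpos)
  have hfixAll : ∀ k, (fun x => ∫ y, f y ∂(Ks k) x) =ᵐ[π] f := fun k => by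
    rw [hKsmod k]; exact hfix _ (Nat.mod_lt _ hKpos)
  -- zero-one law for level sets
  have hzo : ∀ c : ℝ, π {x | c < f x} = 0 ∨ π {x | c < f x} = 1 := by
    intro c
    set A : Set X := {x | c < f x} with hAdef
    have hAm : MeasurableSet A := measurableSet_lt measurable_const hfm
    by_contra hcon
    push_neg at hcon
    obtain ⟨h0, h1⟩ := hcon
    have hAle : π A ≤ 1 := prob_le_one
    have hAc0 : π Aᶜ ≠ 0 := by
      rw [measure_compl hAm (measure_ne_top _ _), measure_univ]
      intro h
      exact h1 (le_antisymm hAle (tsub_eq_zero_iff_le.mp h))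
    have hlev : ∀ k, ∀ᵐ x ∂π, Ks k x A = A.indicator (fun _ => (1:ℝ≥0∞)) x := fun k =>
      myLevel π (Ks k) (hstatAll k) hfm hfi (hfixAll k) c
    have hG : ∀ᵐ x ∂π, ∀ t : ℕ,
        sweepKer Ks (K*t) 0 x A = A.indicator (fun _ => (1:ℝ≥0∞)) x :=
      ae_all_iff.2 fun t => myInvar π Ks hstatAll hAm hlev (K*t) 0
    have hgood : π {x | ¬ ∀ t : ℕ,
        sweepKer Ks (K*t) 0 x A = A.indicator (fun _ => (1:ℝ≥0∞)) x} = 0 := ae_iff.mp hG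
    rcases eq_or_ne (ψ A) 0 with hψ | hψ
    · -- then ψ Aᶜ = 1 > 0; pick x ∈ A which is "good"
      have hψc : 0 < ψ Aᶜ := by
        rw [measure_compl hAm (measure_ne_top _ _), measure_univ, hψ]
        simp
      have hnon : (A ∩ {x | ∀ t : ℕ,
          sweepKer Ks (K*t) 0 x A = A.indicator (fun _ => (1:ℝ≥0∞)) x}).Nonempty := by
        by_contra hemp
        rw [Set.not_nonempty_iff_eq_empty] at hemp
        refine h0 (measure_mono_null (fun x hx => ?_) hgood)
        intro hAll
        exact Set.eq_empty_iff_forall_notMem.mp hemp x ⟨hx, hAll⟩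
      obtain ⟨x, hxA, hxG⟩ := hnon
      obtain ⟨t, _, htpos⟩ := hA2 0 hKpos Aᶜ hAm.compl hψc x
      haveI := myMarkovSweep Ks (K*t) 0
      have hone : sweepKer Ks (K*t) 0 x A = 1 := by
        rw [hxG t, Set.indicator_of_mem hxA]
      have hzero : sweepKer Ks (K*t) 0 x Aᶜ = 0 := by
        rw [measure_compl hAm (measure_ne_top _ _), hone, measure_univ, tsub_self]
      rw [hzero] at htpos
      exact lt_irrefl _ htpos
    · have hψpos : 0 < ψ A := pos_iff_ne_zero.mpr hψ
      have hnon : (Aᶜ ∩ {x | ∀ t : ℕ,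
          sweepKer Ks (K*t) 0 x A = A.indicator (fun _ => (1:ℝ≥0∞)) x}).Nonempty := by
        by_contra hemp
        rw [Set.not_nonempty_iff_eq_empty] at hemp
        refine hAc0 (measure_mono_null (fun x hx => ?_) hgood)
        intro hAll
        exact Set.eq_empty_iff_forall_notMem.mp hemp x ⟨hx, hAll⟩
      obtain ⟨x, hxA, hxG⟩ := hnon
      obtain ⟨t, _, htpos⟩ := hA2 0 hKpos A hAm hψpos x
      have hzero : sweepKer Ks (K*t) 0 x A = 0 := by
        rw [hxG t, Set.indicator_of_notMem hxA]
      rw [hzero] at htpos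
      exact lt_irrefl _ htpos
  -- derive a.e. constancy from the zero-one law
  have hle_zo : ∀ q : ℚ, π {x | f x ≤ (q:ℝ)} = 0 ∨ π {x | f x ≤ (q:ℝ)} = 1 := by
    intro q
    have hAm : MeasurableSet {x | (q:ℝ) < f x} := measurableSet_lt measurable_const hfm
    have hcompl : {x | f x ≤ (q:ℝ)} = {x | (q:ℝ) < f x}ᶜ := by
      ext x; simp [not_lt]
    rcases hzo (q:ℝ) with h | h
    · right; rw [hcompl, measure_compl hAm (measure_ne_top _ _), measure_univ, h, tsub_zero]
    · left; rw [hcompl, measure_compl hAm (measure_ne_top _ _), measure_univ, h, tsub_self]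
  set T : Set ℝ := {c | ∃ q : ℚ, c = (q:ℝ) ∧ π {x | f x ≤ (q:ℝ)} = 1} with hT
  have hTne : T.Nonempty := by
    by_contra hemp
    rw [Set.not_nonempty_iff_eq_empty] at hemp
    have hall : ∀ n : ℕ, π {x | f x ≤ ((n:ℚ):ℝ)} = 0 := by
      intro n
      rcases hle_zo (n:ℚ) with h | h
      · exact h
      · exfalso
        have hmem : ((n:ℚ):ℝ) ∈ T := ⟨(n:ℚ), rfl, h⟩
        rw [hemp] at hmem
        exact hmem
    have hae : ∀ᵐ x ∂π, ∀ n : ℕ, ¬ (f x ≤ ((n:ℚ):ℝ)) :=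
      ae_all_iff.2 fun n => ae_iff.mpr (by simpa [not_not] using hall n)
    have hfalse : ∀ᵐ (_ : X) ∂π, False := by
      filter_upwards [hae] with x hx
      obtain ⟨n, hn⟩ := exists_nat_gt (f x)
      exact hx n (by push_cast; linarith)
    have h2 : π Set.univ = 0 := by simpa using ae_iff.mp hfalse
    rw [measure_univ] at h2
    exact one_ne_zero h2
  have hTbdd : BddBelow T := by
    have hex : ∃ n : ℕ, π {x | f x ≤ ((-(n:ℚ)):ℝ)} = 0 := by
      by_contra hnex
      push_neg at hnex
      have hall : ∀ n : ℕ, π {x | f x ≤ ((-(n:ℚ)):ℝ)} = 1 := by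
        intro n
        rcases hle_zo (-(n:ℚ)) with h | h
        · exact absurd (by push_cast at h ⊢; exact h) (hnex n)
        · push_cast at h ⊢; exact h
      have hae : ∀ᵐ x ∂π, ∀ n : ℕ, f x ≤ ((-(n:ℚ)):ℝ) := by
        refine ae_all_iff.2 fun n => ?_
        have hAm : MeasurableSet {x | f x ≤ ((-(n:ℚ)):ℝ)} :=
          measurableSet_le hfm measurable_const
        have h0 : π {x | f x ≤ ((-(n:ℚ)):ℝ)}ᶜ = 0 := by
          rw [measure_compl hAm (measure_ne_top _ _), measure_univ, hall n, tsub_self]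
        exact ae_iff.mpr h0
      have hfalse : ∀ᵐ (_ : X) ∂π, False := by
        filter_upwards [hae] with x hx
        obtain ⟨n, hn⟩ := exists_nat_gt (-(f x))
        have := hx n
        push_cast at this
        linarith
      have h2 : π Set.univ = 0 := by simpa using ae_iff.mp hfalse
      rw [measure_univ] at h2
      exact one_ne_zero h2
    obtain ⟨n, hn⟩ := hex
    refine ⟨((-(n:ℚ)):ℝ), fun c hc => ?_⟩
    obtain ⟨q, rfl, hq⟩ := hc
    by_contra hlt
    push_neg at hlt
    have hsub : {x | f x ≤ (q:ℝ)} ⊆ {x | f x ≤ ((-(n:ℚ)):ℝ)} := fun x hx =>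
      le_trans hx hlt.le
    have h3 := measure_mono_null hsub hn
    rw [hq] at h3
    exact one_ne_zero h3
  set r : ℝ := sInf T with hr
  have hup : π {x | r < f x} = 0 := by
    have hsub : {x | r < f x} ⊆ ⋃ q ∈ {q : ℚ | r < (q:ℝ)}, {x | (q:ℝ) < f x} := by
      intro x hx
      obtain ⟨q, hq1, hq2⟩ := exists_rat_btwn (Set.mem_setOf_eq ▸ hx)
      exact Set.mem_biUnion hq1 hq2
    refine measure_mono_null hsub ((measure_biUnion_null_iff (Set.to_countable _)).2 ?_)
    intro q hq
    have hq' : r < (q:ℝ) := hq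
    obtain ⟨c, hcT, hcq⟩ := (csInf_lt_iff hTbdd hTne).1 hq'
    obtain ⟨q', rfl, hq'1⟩ := hcT
    have hAm : MeasurableSet {x | f x ≤ ((q':ℚ):ℝ)} := measurableSet_le hfm measurable_const
    have hcompl : π {x | f x ≤ ((q':ℚ):ℝ)}ᶜ = 0 := by
      rw [measure_compl hAm (measure_ne_top _ _), measure_univ, hq'1, tsub_self]
    refine measure_mono_null (fun x hx => ?_) hcompl
    intro hle
    simp only [Set.mem_setOf_eq] at hx hle
    linarith
  have hdown : π {x | f x < r} = 0 := by
    have hsub : {x | f x < r} ⊆ ⋃ q ∈ {q : ℚ | (q:ℝ) < r}, {x | f x ≤ (q:ℝ)} := by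
      intro x hx
      obtain ⟨q, hq1, hq2⟩ := exists_rat_btwn (Set.mem_setOf_eq ▸ hx)
      exact Set.mem_biUnion hq2 (le_of_lt hq1)
    refine measure_mono_null hsub ((measure_biUnion_null_iff (Set.to_countable _)).2 ?_)
    intro q hq
    have hq' : (q:ℝ) < r := hq
    have hnotT : ((q:ℝ)) ∉ T := fun hmem => absurd (csInf_le hTbdd hmem) (not_le.mpr hq')
    rcases hle_zo q with h | h
    · exact h
    · exact absurd ⟨q, rfl, h⟩ hnotT
  have hconst : f =ᵐ[π] fun _ => r := by
    have h0 : π ({x | r < f x} ∪ {x | f x < r}) = 0 := measure_union_null hup hdown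
    have h1 : π {x | f x ≠ r} = 0 := by
      refine measure_mono_null (fun x hx => ?_) h0
      rcases lt_or_gt_of_ne hx with h | h
      · exact Or.inr h
      · exact Or.inl h
    exact ae_iff.mpr h1
  have hint : ∫ x, f x ∂π = r := by
    rw [integral_congr_ae hconst]
    simp [measure_univ]
  filter_upwards [hconst] with x hx
  rw [hx, hint]


end
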